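/- Let N ≥ 2 and a ∈ ℝ. Define ω̄_a(y) = y^1 |y|^{-N/2} |log|y||^a for y in the upper half-space ℝ^N_+ with |y| < 1. Then ω̄_a satisfies the equation -Δω̄_a - (N²/4)|y|^{-2} ω̄_a + a(a-1)|y|^{-2}|log|y||^{-2} ω̄_a = 0 in {y ∈ ℝ^N_+ : 0 < |y| < 1}. -/

import Mathlib

/-!
Write `t = ‖y‖²` and `g(t) = t^(-N/4) (-(log t)/2)^a`, so that `ω̄_a(y) = y¹ g(‖y‖²)` on the
punctured unit ball. For any function of the form `u(x) = xᵢ g(‖x‖²)` one has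
`Δu = xᵢ ((2N + 4) g'(t) + 4 t g''(t))`. For the power-log profile `g`, the term of
`(2N + 4) g' + 4 t g''` carrying `(log t)⁻¹` has coefficient proportional to `4q + N`, where `q` is
the exponent of `t`; the choice `q = -N/4` kills it, and what is left is exactly
`(-N²/4 + a(a-1)|log ‖y‖|⁻²) ‖y‖⁻² ω̄_a`.
-/

open MeasureTheory Real Filter

noncomputable section

/-- The Euclidean Laplacian `Δu(x) = ∑ᵢ ∂²u/∂(xⁱ)²`. -/
def lap {N : ℕ} (u : EuclideanSpace ℝ (Fin N) → ℝ)
    (x : EuclideanSpace ℝ (Fin N)) : ℝ :=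
  ∑ i, fderiv ℝ (fun y => fderiv ℝ u y (EuclideanSpace.single i 1)) x
    (EuclideanSpace.single i 1)

/-- `ω̄_a(y) = y¹ |y|^{-N/2} |log |y||^a`. -/
def obar {N : ℕ} (hN : 2 ≤ N) (a : ℝ) (y : EuclideanSpace ℝ (Fin N)) : ℝ :=
  y ⟨0, by omega⟩ * ‖y‖ ^ (-(N : ℝ)/2) * |Real.log ‖y‖| ^ a

open Topology
open scoped RealInnerProductSpace

section
variable {E : Type*} [NormedAddCommGroup E] [InnerProductSpace ℝ E]

theorem HasDerivAt.comp_norm_sq {g : ℝ → ℝ} {g' : ℝ} {x : E} (hg : HasDerivAt g g' (‖x‖ ^ 2)) :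
    HasFDerivAt (fun z : E => g (‖z‖ ^ 2)) ((2 * g') • innerSL ℝ x) x := by
  refine (hg.comp_hasFDerivAt x (hasStrictFDerivAt_norm_sq x).hasFDerivAt).congr_fderiv ?_
  ext v
  simp only [smul_apply, coe_innerSL_apply, nsmul_eq_mul, Nat.cast_ofNat, smul_eq_mul]
  ring

theorem fderiv_fderiv_apply_clm_mul_comp_norm_sq (ℓ : E →L[ℝ] ℝ) {g g' : ℝ → ℝ} {g'' : ℝ} {x : E}
    (hg : ∀ᶠ s in 𝓝 (‖x‖ ^ 2), HasDerivAt g (g' s) s) (hg' : HasDerivAt g' g'' (‖x‖ ^ 2))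
    (v : E) :
    fderiv ℝ (fun z => fderiv ℝ (fun z => ℓ z * g (‖z‖ ^ 2)) z v) x v =
      4 * ℓ v * ⟪x, v⟫ * g' (‖x‖ ^ 2) + 2 * ℓ x * ‖v‖ ^ 2 * g' (‖x‖ ^ 2)
        + 4 * ℓ x * ⟪x, v⟫ ^ 2 * g'' := by
  have hnear : ∀ᶠ z in 𝓝 x, HasDerivAt g (g' (‖z‖ ^ 2)) (‖z‖ ^ 2) :=
    ((continuous_norm.pow 2).tendsto x).eventually hg
  have hfirst : (fun z => fderiv ℝ (fun z => ℓ z * g (‖z‖ ^ 2)) z v) =ᶠ[𝓝 x]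
      fun z => ℓ v * g (‖z‖ ^ 2) + 2 * (ℓ z * ⟪v, z⟫ * g' (‖z‖ ^ 2)) := by
    filter_upwards [hnear] with z hz
    have h : HasFDerivAt (fun z => ℓ z * g (‖z‖ ^ 2)) _ z := ℓ.hasFDerivAt.mul hz.comp_norm_sq
    rw [h.fderiv]
    simp only [add_apply, smul_apply, coe_innerSL_apply, real_inner_comm, smul_eq_mul]
    ring
  have hsecond : HasFDerivAt
      (fun z => ℓ v * g (‖z‖ ^ 2) + 2 * (ℓ z * ⟪v, z⟫ * g' (‖z‖ ^ 2))) _ x :=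
    ((hg.self_of_nhds.comp_norm_sq).const_mul (ℓ v)).add
      (((ℓ.hasFDerivAt.mul (innerSL ℝ v).hasFDerivAt).mul hg'.comp_norm_sq).const_mul 2)
  rw [hfirst.fderiv_eq, hsecond.fderiv]
  simp only [coe_innerSL_apply, Pi.mul_apply, real_inner_comm, smul_add, add_apply, smul_apply,
    smul_eq_mul, inner_self_eq_norm_sq_to_K, Real.ringHom_apply]
  ring

end

section
variable {N : ℕ}

theorem lap_congr {u v : EuclideanSpace ℝ (Fin N) → ℝ} {x : EuclideanSpace ℝ (Fin N)}
    (h : u =ᶠ[𝓝 x] v) : lap u x = lap v x := by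
  unfold lap
  congr! 2 with i
  exact Filter.EventuallyEq.fderiv_eq <| (h.fderiv (𝕜 := ℝ)).mono fun z hz =>
    congrArg (fun L => L (EuclideanSpace.single i 1)) hz

theorem lap_coord_mul_comp_norm_sq (i₀ : Fin N) {g g' : ℝ → ℝ} {g'' : ℝ}
    {x : EuclideanSpace ℝ (Fin N)}
    (hg : ∀ᶠ s in 𝓝 (‖x‖ ^ 2), HasDerivAt g (g' s) s) (hg' : HasDerivAt g' g'' (‖x‖ ^ 2)) :
    lap (fun z => z i₀ * g (‖z‖ ^ 2)) x =
      x i₀ * ((2 * N + 4) * g' (‖x‖ ^ 2) + 4 * ‖x‖ ^ 2 * g'') := by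
  have hsecond := fderiv_fderiv_apply_clm_mul_comp_norm_sq (EuclideanSpace.proj i₀) hg hg'
  simp only [EuclideanSpace.coe_proj] at hsecond
  simp only [lap, hsecond]
  simp only [PiLp.single_apply, mul_ite, mul_one, mul_zero, EuclideanSpace.inner_single_right,
    Real.ringHom_apply, one_mul, ite_mul, zero_mul, PiLp.norm_single, norm_one, one_pow,
    Finset.sum_add_distrib, Finset.sum_ite_eq, Finset.mem_univ, ↓reduceIte, Finset.sum_const,
    Finset.card_univ, Fintype.card_fin, nsmul_eq_mul, ← Finset.sum_mul, ← Finset.mul_sum,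
    EuclideanSpace.norm_sq_eq, Real.norm_eq_abs, sq_abs]
  ring

end

-- The factor `1/2` makes `powLog q b (r ^ 2) = r ^ (2 * q) * |log r| ^ b` for `0 < r < 1`.
def powLog (q b t : ℝ) : ℝ := t ^ q * (-Real.log t / 2) ^ b

def powLogDeriv (q b t : ℝ) : ℝ := q * powLog (q - 1) b t - b / 2 * powLog (q - 1) (b - 1) t

section
variable {t : ℝ}

theorem hasDerivAt_powLog (q b : ℝ) (ht : t ∈ Set.Ioo 0 1) :
    HasDerivAt (powLog q b) (powLogDeriv q b t) t := by
  have hL : 0 < -Real.log t / 2 := by linarith [Real.log_neg ht.1 ht.2]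
  have hpow := Real.hasDerivAt_rpow_const (p := q) (Or.inl ht.1.ne')
  have hlog :=
    (((Real.hasDerivAt_log ht.1.ne').neg).div_const 2).rpow_const (p := b) (Or.inl hL.ne')
  refine (hpow.mul hlog).congr_deriv ?_
  simp only [powLogDeriv, powLog, Pi.neg_apply, Real.rpow_sub_one ht.1.ne',
    Real.rpow_sub_one hL.ne']
  field_simp
  ring

theorem hasDerivAt_powLogDeriv (q b : ℝ) (ht : t ∈ Set.Ioo 0 1) :
    HasDerivAt (powLogDeriv q b)
      (q * powLogDeriv (q - 1) b t - b / 2 * powLogDeriv (q - 1) (b - 1) t) t :=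
  ((hasDerivAt_powLog (q - 1) b ht).const_mul q).sub
    ((hasDerivAt_powLog (q - 1) (b - 1) ht).const_mul (b / 2))

theorem powLog_sub_one_left (q b : ℝ) (ht : 0 < t) : powLog (q - 1) b t = t⁻¹ * powLog q b t := by
  rw [powLog, powLog, Real.rpow_sub_one ht.ne']; ring

theorem powLog_sub_one_right (q b : ℝ) (ht : t ∈ Set.Ioo 0 1) :
    powLog q (b - 1) t = (-Real.log t / 2)⁻¹ * powLog q b t := by
  have hL : -Real.log t / 2 ≠ 0 := by linarith [Real.log_neg ht.1 ht.2]
  rw [powLog, powLog, Real.rpow_sub_one hL]; ring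

theorem powLog_radial_eq (N : ℕ) (a : ℝ) (ht : t ∈ Set.Ioo 0 1) :
    (2 * N + 4) * powLogDeriv (-N / 4) a t
      + 4 * t * (-N / 4 * powLogDeriv (-N / 4 - 1) a t - a / 2 * powLogDeriv (-N / 4 - 1) (a - 1) t)
      = (-(N ^ 2 / 4) + a * (a - 1) * (-Real.log t / 2)⁻¹ ^ 2) * (t⁻¹ * powLog (-N / 4) a t) := by
  have htt : t * t⁻¹ = 1 := mul_inv_cancel₀ ht.1.ne'
  simp only [powLogDeriv, powLog_sub_one_left _ _ ht.1, powLog_sub_one_right _ _ ht]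
  linear_combination (4 * t⁻¹ * ((-N / 4) * ((-N / 4) - 1)
      - ((-N / 4) * a / 2 + a / 2 * ((-N / 4) - 1)) * (-Real.log t / 2)⁻¹
      + a * (a - 1) / 4 * ((-Real.log t / 2)⁻¹) ^ 2) * powLog (-N / 4) a t) * htt

end

theorem obar_eq_coord_mul_powLog {N : ℕ} (hN : 2 ≤ N) (a : ℝ) {y : EuclideanSpace ℝ (Fin N)}
    (hy : ‖y‖ ∈ Set.Ioo 0 1) :
    obar hN a y = y ⟨0, by omega⟩ * powLog (-N / 4) a (‖y‖ ^ 2) := by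
  rw [obar, powLog, ← Real.rpow_natCast, ← Real.rpow_mul (norm_nonneg y), Real.log_rpow hy.1,
    abs_of_neg (Real.log_neg hy.1 hy.2)]
  push_cast
  ring_nf

/-- `ω̄_a` solves
`-Δω̄_a - (N²/4)|y|⁻² ω̄_a + a(a-1)|y|⁻²|log|y||⁻² ω̄_a = 0`
on `{y ∈ ℝ^N_+ : 0 < |y| < 1}`. -/
theorem obar_solves (N : ℕ) (hN : 2 ≤ N) (a : ℝ)
    (y : EuclideanSpace ℝ (Fin N))
    (hy0 : 0 < ‖y‖) (hylt : ‖y‖ < 1) :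
    -lap (obar hN a) y - ((N : ℝ)^2/4) * ‖y‖⁻¹^2 * obar hN a y
      + a * (a - 1) * ‖y‖⁻¹^2 * |Real.log ‖y‖|⁻¹^2 * obar hN a y = 0 := by
  have hy : ‖y‖ ∈ Set.Ioo 0 1 := ⟨hy0, hylt⟩
  have ht : ‖y‖ ^ 2 ∈ Set.Ioo 0 1 := ⟨by positivity, by nlinarith⟩
  have hloc : obar hN a =ᶠ[𝓝 y] fun z => z ⟨0, by omega⟩ * powLog (-N / 4) a (‖z‖ ^ 2) :=
    Filter.eventually_of_mem ((isOpen_Ioo.preimage continuous_norm).mem_nhds hy)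
      fun z hz => obar_eq_coord_mul_powLog hN a hz
  have hderiv : ∀ᶠ s in 𝓝 (‖y‖ ^ 2), HasDerivAt (powLog (-N / 4) a) (powLogDeriv (-N / 4) a s) s :=
    Filter.eventually_of_mem (isOpen_Ioo.mem_nhds ht) fun s hs => hasDerivAt_powLog _ _ hs
  have hlog : |Real.log ‖y‖| = -Real.log (‖y‖ ^ 2) / 2 := by
    rw [Real.log_pow, abs_of_neg (Real.log_neg hy0 hylt)]; push_cast; ring
  rw [lap_congr hloc, lap_coord_mul_comp_norm_sq _ hderiv (hasDerivAt_powLogDeriv _ _ ht),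
    powLog_radial_eq N a ht, obar_eq_coord_mul_powLog hN a hy, hlog, inv_pow]
  ring
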